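/- (Fubini for gauge integrals) Let I × J ⊆ ℝᵐ × ℝⁿ be a brick and f(x,y) Henstock–Kurzweil integrable on K = I × J with integral F. Then g(x) := ∫_J f(x,·) dν exists for all x outside a set of μ-outer measure zero on I; setting g(x) = 0 on the exceptional set, g is HK-integrable on I and ∫_I g dμ = F. Symmetrically, h(y) := ∫_I f(·,y) dμ exists for a.e. y and ∫_J h dν = F. -/

import Mathlib

open Set Filter

/-- A brick (compact non-degenerate interval) in `ι → ℝ`. -/
structure Brick (ι : Type*) [Fintype ι] where
  lower : ι → ℝ
  upper : ι → ℝ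
  lt : ∀ j, lower j < upper j

variable {ι : Type*} [Fintype ι]

namespace Brick

/-- The underlying closed set of a brick. -/
def toSet (I : Brick ι) : Set (ι → ℝ) := {x | ∀ j, x j ∈ Set.Icc (I.lower j) (I.upper j)}

/-- The open interior of a brick. -/
def inter (I : Brick ι) : Set (ι → ℝ) := {x | ∀ j, x j ∈ Set.Ioo (I.lower j) (I.upper j)}

/-- The volume of a brick. -/
noncomputable def vol (I : Brick ι) : ℝ := ∏ j, (I.upper j - I.lower j)

end Brick

/-- A tagged division of a brick `I`: finitely many non-overlapping sub-bricks covering `I`,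
each with a tag point belonging to it. -/
structure TaggedDiv {ι : Type*} [Fintype ι] (I : Brick ι) where
  pieces : Finset (Brick ι × (ι → ℝ))
  subset_of_mem : ∀ p ∈ pieces, (p.1 : Brick ι).toSet ⊆ I.toSet
  tag_mem : ∀ p ∈ pieces, p.2 ∈ (p.1 : Brick ι).toSet
  nonoverlap : ∀ p ∈ pieces, ∀ q ∈ pieces, p ≠ q →
    (p.1 : Brick ι).inter ∩ (q.1 : Brick ι).inter = ∅
  cover : I.toSet = ⋃ p ∈ pieces, (p.1 : Brick ι).toSet

/-- A gauge on a brick: a function positive at each point of the brick. -/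
def IsGauge (I : Brick ι) (δ : (ι → ℝ) → ℝ) : Prop := ∀ x ∈ I.toSet, 0 < δ x

/-- A tagged division is compatible with the gauge `δ` if each brick lies in the open ball
of radius `δ` about its tag. -/
def Compat {I : Brick ι} (D : TaggedDiv I) (δ : (ι → ℝ) → ℝ) : Prop :=
  ∀ p ∈ D.pieces, (p.1 : Brick ι).toSet ⊆ Metric.ball p.2 (δ p.2)

/-- The Riemann sum of `f` over a tagged division. -/
noncomputable def riemannSum {I : Brick ι} (f : (ι → ℝ) → ℝ) (D : TaggedDiv I) : ℝ :=
  ∑ p ∈ D.pieces, f p.2 * (p.1 : Brick ι).vol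

/-- `f` has Henstock–Kurzweil integral `A` on the brick `I`. -/
def HasHK (I : Brick ι) (f : (ι → ℝ) → ℝ) (A : ℝ) : Prop :=
  ∀ ε > 0, ∃ δ : (ι → ℝ) → ℝ, IsGauge I δ ∧
    ∀ D : TaggedDiv I, Compat D δ → |riemannSum f D - A| < ε

open scoped ENNReal Classical

/-- The sum of `|h|` over a tagged division, for an interval-point function `h`. -/
noncomputable def varSum {I : Brick ι} (h : Brick ι → (ι → ℝ) → ℝ) (D : TaggedDiv I) : ℝ :=
  ∑ p ∈ D.pieces, |h p.1 p.2|

/-- The (Henstock) variation of an interval-point function `h` on a brick `I`. -/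
noncomputable def variation (I : Brick ι) (h : Brick ι → (ι → ℝ) → ℝ) : ℝ≥0∞ :=
  ⨅ δ ∈ {δ : (ι → ℝ) → ℝ | IsGauge I δ},
    ⨆ D ∈ {D : TaggedDiv I | Compat D δ}, ENNReal.ofReal (varSum h D)

/-- The variation of `h` on `I` with tags restricted to the set `X`. -/
noncomputable def variationOn (I : Brick ι) (h : Brick ι → (ι → ℝ) → ℝ)
    (X : Set (ι → ℝ)) : ℝ≥0∞ :=
  variation I (fun J P => if P ∈ X then h J P else 0)

/-- The outer measure of a set `X` in the brick `I`, defined via the Henstock variation of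
the volume function restricted to `X`. -/
noncomputable def mustar (I : Brick ι) (X : Set (ι → ℝ)) : ℝ≥0∞ :=
  variationOn I (fun J _ => J.vol) X

/-- The product of a brick in `ι → ℝ` with a brick in `κ → ℝ`, as a brick in `ι ⊕ κ → ℝ`. -/
def Brick.prod {κ : Type*} [Fintype κ] (I : Brick ι) (J : Brick κ) : Brick (ι ⊕ κ) where
  lower := Sum.elim I.lower J.lower
  upper := Sum.elim I.upper J.upper
  lt := by rintro (j | j); exacts [I.lt j, J.lt j]

/-! Fix a gauge `Δ` on `I × J` that is `ε`-fine for `f`. At a point `x` of `I` where the Riemann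
sums of the section `f(x, ·)` oscillate by more than `η` at every gauge, choose two
`Δ(x, ·)`-fine divisions of `J` realizing the oscillation. Assembled over a fine division of `I`,
these give two `Δ`-fine divisions of `I × J` whose Riemann sums differ by at least `η` times the
volume of the pieces tagged at such points, and by less than `2ε` since both approximate `F`.
Hence the set where the section oscillates by more than `η` is null, and off the countable union
of these sets every section is integrable by the Cauchy criterion. Assembling in the same way
divisions of `J` that approximate the partial integrals `g(x)` shows that the Riemann sums of `g`
approximate `F`: the exceptional set contributes nothing, because any function times the volume
has zero variation on a null set. The second half follows from the first by swapping the factors.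
-/

theorem BoxIntegral.Box.closure_coe_eq_Icc {κ : Type*} (J : BoxIntegral.Box κ) :
    closure (J : Set (κ → ℝ)) = BoxIntegral.Box.Icc J := by
  simp [BoxIntegral.Box.coe_eq_pi, BoxIntegral.Box.Icc_eq_pi, closure_pi_set,
    closure_Ioc (J.lower_lt_upper _).ne]

namespace Brick

theorem ext {B C : Brick ι} (hl : B.lower = C.lower) (hu : B.upper = C.upper) : B = C := by
  cases B; cases C; simp_all

theorem toSet_eq_Icc (B : Brick ι) : B.toSet = Icc B.lower B.upper := by
  ext x; simp [toSet, Pi.le_def, forall_and]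

theorem lower_mem_toSet (B : Brick ι) : B.lower ∈ B.toSet :=
  fun j => ⟨le_rfl, (B.lt j).le⟩

theorem upper_mem_toSet (B : Brick ι) : B.upper ∈ B.toSet :=
  fun j => ⟨(B.lt j).le, le_rfl⟩

theorem vol_nonneg (B : Brick ι) : 0 ≤ B.vol :=
  Finset.prod_nonneg fun j _ => sub_nonneg.2 (B.lt j).le

theorem inter_subset_toSet (B : Brick ι) : B.inter ⊆ B.toSet :=
  fun _ hx j => Ioo_subset_Icc_self (hx j)

theorem inter_mono {B C : Brick ι} (h : B.toSet ⊆ C.toSet) : B.inter ⊆ C.inter := by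
  intro x hx j
  exact ⟨(h B.lower_mem_toSet j).1.trans_lt (hx j).1,
    (hx j).2.trans_le (h B.upper_mem_toSet j).2⟩

theorem volume_toSet (B : Brick ι) : MeasureTheory.volume B.toSet = ENNReal.ofReal B.vol := by
  rw [toSet_eq_Icc, Real.volume_Icc_pi, vol,
    ENNReal.ofReal_prod_of_nonneg fun j _ => sub_nonneg.2 (B.lt j).le]

theorem inter_eq_pi (B : Brick ι) : B.inter = pi univ fun j => Ioo (B.lower j) (B.upper j) := by
  ext; simp [inter]

theorem volume_inter (B : Brick ι) : MeasureTheory.volume B.inter = ENNReal.ofReal B.vol := by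
  rw [inter_eq_pi, Real.volume_pi_Ioo, vol,
    ENNReal.ofReal_prod_of_nonneg fun j _ => sub_nonneg.2 (B.lt j).le]

theorem measurableSet_inter (B : Brick ι) : MeasurableSet B.inter :=
  B.inter_eq_pi ▸ MeasurableSet.univ_pi fun _ => measurableSet_Ioo

def toBox (B : Brick ι) : BoxIntegral.Box ι := ⟨B.lower, B.upper, B.lt⟩

def ofBox (J : BoxIntegral.Box ι) : Brick ι := ⟨J.lower, J.upper, J.lower_lt_upper⟩

theorem toSet_ofBox (J : BoxIntegral.Box ι) : (ofBox J).toSet = BoxIntegral.Box.Icc J :=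
  toSet_eq_Icc _

theorem inter_ofBox_subset (J : BoxIntegral.Box ι) : (ofBox J).inter ⊆ J := by
  intro x hx
  exact (BoxIntegral.Box.mem_coe J).2 fun j => Ioo_subset_Ioc_self (hx j)

end Brick

namespace TaggedDiv

variable {I : Brick ι}

theorem tag_mem_base (D : TaggedDiv I) {p : Brick ι × (ι → ℝ)} (hp : p ∈ D.pieces) :
    p.2 ∈ I.toSet :=
  D.subset_of_mem p hp (D.tag_mem p hp)

theorem pieces_nonempty (D : TaggedDiv I) : D.pieces.Nonempty := by
  have h := I.lower_mem_toSet
  rw [D.cover, mem_iUnion₂] at h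
  obtain ⟨p, hp, -⟩ := h
  exact ⟨p, hp⟩

def single (B : Brick ι) (t : ι → ℝ) (ht : t ∈ B.toSet) : TaggedDiv B where
  pieces := {(B, t)}
  subset_of_mem := by simp
  tag_mem := by simpa using ht
  nonoverlap p hp q hq hne := absurd ((Finset.mem_singleton.1 hp).trans
    (Finset.mem_singleton.1 hq).symm) hne
  cover := by simp

open MeasureTheory in
theorem sum_vol (D : TaggedDiv I) : ∑ p ∈ D.pieces, p.1.vol = I.vol := by
  have hdisj : (D.pieces : Set (Brick ι × (ι → ℝ))).PairwiseDisjoint fun p => p.1.inter :=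
    fun p hp q hq hne => Set.disjoint_iff_inter_eq_empty.2 (D.nonoverlap p hp q hq hne)
  have hunion : volume (⋃ p ∈ D.pieces, p.1.inter) = ∑ p ∈ D.pieces, ENNReal.ofReal p.1.vol := by
    rw [measure_biUnion_finset hdisj fun p _ => p.1.measurableSet_inter]
    simp only [Brick.volume_inter]
  -- squeeze `vol I` between the disjoint union of the interiors and the cover
  have hle : volume (⋃ p ∈ D.pieces, p.1.inter) ≤ volume I.toSet :=
    measure_mono <| iUnion₂_subset fun p hp =>
      p.1.inter_subset_toSet.trans (D.subset_of_mem p hp)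
  have hge : volume I.toSet ≤ ∑ p ∈ D.pieces, ENNReal.ofReal p.1.vol := by
    conv_lhs => rw [D.cover]
    refine (measure_biUnion_finset_le _ _).trans_eq ?_
    simp only [Brick.volume_toSet]
  rw [hunion] at hle
  have := le_antisymm hge hle
  rw [Brick.volume_toSet, ← ENNReal.ofReal_sum_of_nonneg fun p _ => p.1.vol_nonneg] at this
  exact ((ENNReal.ofReal_eq_ofReal_iff I.vol_nonneg
    (Finset.sum_nonneg fun p _ => p.1.vol_nonneg)).1 this).symm

noncomputable def ofTaggedPrepartition (B : Brick ι) (π : BoxIntegral.TaggedPrepartition B.toBox)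
    (hπ : π.IsPartition) (hH : π.IsHenstock) : TaggedDiv B where
  pieces := π.boxes.image fun J => (Brick.ofBox J, π.tag J)
  subset_of_mem := by
    simp only [Finset.mem_image, forall_exists_index, and_imp]
    rintro _ J hJ rfl
    rw [Brick.toSet_ofBox, Brick.toSet_eq_Icc]
    exact BoxIntegral.Box.le_iff_Icc.1 (π.le_of_mem hJ)
  tag_mem := by
    simp only [Finset.mem_image, forall_exists_index, and_imp]
    rintro _ J hJ rfl
    exact (Brick.toSet_ofBox J).symm ▸ hH J hJ
  nonoverlap := by
    simp only [Finset.mem_image, forall_exists_index, and_imp]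
    rintro _ J hJ rfl _ J' hJ' rfl hne
    have hJJ' : J ≠ J' := by rintro rfl; exact hne rfl
    exact Set.disjoint_iff_inter_eq_empty.1 <|
      (π.disjoint_coe_of_mem hJ hJ' hJJ').mono (Brick.inter_ofBox_subset J)
        (Brick.inter_ofBox_subset J')
  cover := by
    rw [Finset.set_biUnion_finset_image, Brick.toSet_eq_Icc]
    simp only [Brick.toSet_ofBox]
    change BoxIntegral.Box.Icc B.toBox = _
    rw [← BoxIntegral.Box.closure_coe_eq_Icc, ← hπ.iUnion_eq, BoxIntegral.Prepartition.iUnion_def',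
      Finset.closure_biUnion]
    simp only [BoxIntegral.Box.closure_coe_eq_Icc]

/-- Cousin's lemma. -/
theorem exists_compat (B : Brick ι) {δ : (ι → ℝ) → ℝ} (hδ : IsGauge B δ) :
    ∃ D : TaggedDiv B, Compat D δ := by
  let r : (ι → ℝ) → Ioi (0 : ℝ) := fun x =>
    if hx : x ∈ B.toSet then ⟨δ x / 2, half_pos (hδ x hx)⟩ else ⟨1, mem_Ioi.2 one_pos⟩
  obtain ⟨π, hπ, hH, hr, -⟩ :=
    BoxIntegral.Box.exists_taggedPartition_isHenstock_isSubordinate_homothetic B.toBox r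
  refine ⟨ofTaggedPrepartition B π hπ hH, ?_⟩
  simp only [Compat, ofTaggedPrepartition, Finset.mem_image, forall_exists_index, and_imp]
  rintro _ J hJ rfl
  have htag : π.tag J ∈ B.toSet := (Brick.toSet_eq_Icc B).symm ▸ π.tag_mem_Icc J
  have hsub := hr J hJ
  simp only [r, dif_pos htag] at hsub
  rw [Brick.toSet_ofBox]
  exact hsub.trans (Metric.closedBall_subset_ball (half_lt_self (hδ _ htag)))

end TaggedDiv

theorem IsGauge.min {I : Brick ι} {δ δ' : (ι → ℝ) → ℝ} (h : IsGauge I δ) (h' : IsGauge I δ') :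
    IsGauge I fun x => min (δ x) (δ' x) :=
  fun x hx => lt_min (h x hx) (h' x hx)

theorem Compat.mono {I : Brick ι} {D : TaggedDiv I} {δ δ' : (ι → ℝ) → ℝ} (hD : Compat D δ)
    (hle : ∀ x, δ x ≤ δ' x) : Compat D δ' :=
  fun p hp => (hD p hp).trans (Metric.ball_subset_ball (hle p.2))

namespace TaggedDiv

variable {I : Brick ι}

noncomputable def glue (D : TaggedDiv I) (E : ∀ p : Brick ι × (ι → ℝ), TaggedDiv p.1) :
    TaggedDiv I where
  pieces := D.pieces.biUnion fun p => (E p).pieces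
  subset_of_mem r hr := by
    obtain ⟨p, hp, hr⟩ := Finset.mem_biUnion.1 hr
    exact ((E p).subset_of_mem r hr).trans (D.subset_of_mem p hp)
  tag_mem r hr := by
    obtain ⟨p, -, hr⟩ := Finset.mem_biUnion.1 hr
    exact (E p).tag_mem r hr
  nonoverlap r hr s hs hne := by
    obtain ⟨p, hp, hr⟩ := Finset.mem_biUnion.1 hr
    obtain ⟨q, hq, hs⟩ := Finset.mem_biUnion.1 hs
    by_cases hpq : p = q
    · subst hpq
      exact (E p).nonoverlap r hr s hs hne
    · exact subset_empty_iff.1 <| (D.nonoverlap p hp q hq hpq) ▸ inter_subset_inter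
        (Brick.inter_mono ((E p).subset_of_mem r hr)) (Brick.inter_mono ((E q).subset_of_mem s hs))
  cover := by
    simp only [Finset.set_biUnion_biUnion, ← (E _).cover]
    exact D.cover

theorem glue_compat (D : TaggedDiv I) (E : ∀ p : Brick ι × (ι → ℝ), TaggedDiv p.1)
    {δ : (ι → ℝ) → ℝ} (h : ∀ p ∈ D.pieces, Compat (E p) δ) : Compat (D.glue E) δ := by
  intro r hr
  obtain ⟨p, hp, hr⟩ := Finset.mem_biUnion.1 hr
  exact h p hp r hr

theorem exists_compat_superset {δ : (ι → ℝ) → ℝ} (hδ : IsGauge I δ) (D : TaggedDiv I)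
    {T : Finset (Brick ι × (ι → ℝ))} (hTD : T ⊆ D.pieces)
    (hT : ∀ p ∈ T, p.1.toSet ⊆ Metric.ball p.2 (δ p.2)) :
    ∃ D' : TaggedDiv I, Compat D' δ ∧ T ⊆ D'.pieces := by
  have hE : ∀ p : Brick ι × (ι → ℝ), ∃ E : TaggedDiv p.1,
      p ∈ D.pieces → Compat E δ ∧ (p ∈ T → p ∈ E.pieces) := by
    intro p
    by_cases hpT : p ∈ T
    · refine ⟨single p.1 p.2 (D.tag_mem p (hTD hpT)), fun _ => ⟨?_, fun _ => by simp [single]⟩⟩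
      simpa [Compat, single] using hT p hpT
    · by_cases hpD : p ∈ D.pieces
      · obtain ⟨E, hE⟩ := exists_compat p.1 fun x hx => hδ x (D.subset_of_mem p hpD hx)
        exact ⟨E, fun _ => ⟨hE, fun h => absurd h hpT⟩⟩
      · exact ⟨single p.1 p.1.lower p.1.lower_mem_toSet, fun h => absurd h hpD⟩
  choose E hE using hE
  refine ⟨D.glue E, D.glue_compat E fun p hp => (hE p hp).1, fun p hpT => ?_⟩
  exact Finset.mem_biUnion.2 ⟨p, hTD hpT, (hE p (hTD hpT)).2 hpT⟩

end TaggedDiv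

section Variation

variable {I : Brick ι} {h : Brick ι → (ι → ℝ) → ℝ}

theorem varSum_nonneg (h : Brick ι → (ι → ℝ) → ℝ) (D : TaggedDiv I) : 0 ≤ varSum h D :=
  Finset.sum_nonneg fun _ _ => abs_nonneg _

theorem varSum_ite_vol (X : Set (ι → ℝ)) [DecidablePred (· ∈ X)] (D : TaggedDiv I) :
    varSum (fun B t => if t ∈ X then B.vol else 0) D =
      ∑ p ∈ D.pieces, if p.2 ∈ X then p.1.vol else 0 := by
  refine Finset.sum_congr rfl fun p _ => abs_of_nonneg ?_
  dsimp only
  split_ifs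
  exacts [p.1.vol_nonneg, le_rfl]

theorem variation_eq_zero_iff : variation I h = 0 ↔
    ∀ ε > 0, ∃ δ, IsGauge I δ ∧ ∀ D : TaggedDiv I, Compat D δ → varSum h D < ε := by
  constructor
  · intro hv ε hε
    have hlt : variation I h < ENNReal.ofReal ε := hv ▸ ENNReal.ofReal_pos.2 hε
    simp only [variation, iInf_lt_iff] at hlt
    obtain ⟨δ, hδ, hlt⟩ := hlt
    refine ⟨δ, hδ, fun D hD => (ENNReal.ofReal_lt_ofReal_iff hε).1 ?_⟩
    exact (le_iSup₂ (f := fun D (_ : D ∈ {D : TaggedDiv I | Compat D δ}) =>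
      ENNReal.ofReal (varSum h D)) D hD).trans_lt hlt
  · intro H
    refine le_antisymm (ENNReal.le_of_forall_pos_le_add fun ε hε _ => ?_) zero_le
    obtain ⟨δ, hδ, hb⟩ := H ε (by exact_mod_cast hε)
    refine (iInf₂_le δ hδ).trans (iSup₂_le fun D hD => ?_)
    rw [zero_add, ← ENNReal.ofReal_coe_nnreal]
    exact ENNReal.ofReal_le_ofReal (hb D hD).le

theorem exists_gauge_sum_abs_lt (hv : variation I h = 0) {ε : ℝ} (hε : 0 < ε) :
    ∃ δ, IsGauge I δ ∧ ∀ (D : TaggedDiv I) (T : Finset (Brick ι × (ι → ℝ))), T ⊆ D.pieces →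
      (∀ p ∈ T, p.1.toSet ⊆ Metric.ball p.2 (δ p.2)) → ∑ p ∈ T, |h p.1 p.2| < ε := by
  obtain ⟨δ, hδ, hb⟩ := variation_eq_zero_iff.1 hv ε hε
  refine ⟨δ, hδ, fun D T hTD hT => ?_⟩
  obtain ⟨D', hD', hTD'⟩ := D.exists_compat_superset hδ hTD hT
  exact (Finset.sum_le_sum_of_subset_of_nonneg hTD' fun _ _ _ => abs_nonneg _).trans_lt
    (hb D' hD')

theorem variation_eq_zero_of_abs_le {h' : Brick ι → (ι → ℝ) → ℝ} {c : ℝ}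
    (hle : ∀ B t, |h B t| ≤ c * |h' B t|) (hv : variation I h' = 0) : variation I h = 0 := by
  refine variation_eq_zero_iff.2 fun ε hε => ?_
  have hc : 0 < |c| + 1 := by positivity
  obtain ⟨δ, hδ, hb⟩ := variation_eq_zero_iff.1 hv (ε / (|c| + 1)) (div_pos hε hc)
  refine ⟨δ, hδ, fun D hD => ?_⟩
  have hsum : varSum h D ≤ |c| * varSum h' D := by
    rw [varSum, varSum, Finset.mul_sum]
    exact Finset.sum_le_sum fun p _ =>
      (hle p.1 p.2).trans (mul_le_mul_of_nonneg_right (le_abs_self c) (abs_nonneg _))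
  calc varSum h D ≤ |c| * varSum h' D := hsum
    _ ≤ (|c| + 1) * varSum h' D := by nlinarith [varSum_nonneg h' D]
    _ < (|c| + 1) * (ε / (|c| + 1)) := mul_lt_mul_of_pos_left (hb D hD) hc
    _ = ε := mul_div_cancel₀ ε hc.ne'

theorem variationOn_iUnion_eq_zero {W : ℕ → Set (ι → ℝ)}
    (hW : ∀ n, variationOn I h (W n) = 0) : variationOn I h (⋃ n, W n) = 0 := by
  refine variation_eq_zero_iff.2 fun ε hε => ?_
  choose δ hδ hsum using fun n : ℕ =>
    exists_gauge_sum_abs_lt (hW n) (by positivity : 0 < ε / 4 * (1 / 2) ^ n)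
  -- a tag is handled by the gauge of the first `W n` containing it
  let idx : (ι → ℝ) → ℕ := fun x => if hx : ∃ n, x ∈ W n then Nat.find hx else 0
  have hidx : ∀ x ∈ ⋃ n, W n, x ∈ W (idx x) := fun x hx => by
    have hx' := mem_iUnion.1 hx
    simpa only [idx, dif_pos hx'] using Nat.find_spec hx'
  refine ⟨fun x => δ (idx x) x, fun x hx => hδ _ x hx, fun D hD => ?_⟩
  let T := D.pieces.filter fun p => p.2 ∈ ⋃ n, W n
  have hvar : varSum (fun B t => if t ∈ ⋃ n, W n then h B t else 0) D =
      ∑ p ∈ T, |h p.1 p.2| := by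
    rw [varSum, Finset.sum_filter]
    exact Finset.sum_congr rfl fun p _ => by split_ifs <;> simp
  have hfiber : ∀ n, ∑ p ∈ T.filter (fun p => idx p.2 = n), |h p.1 p.2| <
      ε / 4 * (1 / 2) ^ n := by
    intro n
    have hTn : T.filter (fun p => idx p.2 = n) ⊆ D.pieces :=
      (Finset.filter_subset _ _).trans (Finset.filter_subset _ _)
    have hmem : ∀ p ∈ T.filter (fun p => idx p.2 = n), p.2 ∈ W n := by
      intro p hp
      obtain ⟨hpT, rfl⟩ := Finset.mem_filter.1 hp
      exact hidx _ (Finset.mem_filter.1 hpT).2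
    refine lt_of_eq_of_lt (Finset.sum_congr rfl fun p hp => ?_) (hsum n D _ hTn fun p hp => ?_)
    · simp [hmem p hp]
    · simpa only [(Finset.mem_filter.1 hp).2] using hD p (hTn hp)
  have hgeom : ∑ n ∈ T.image (fun p => idx p.2), ((1 : ℝ) / 2) ^ n ≤ 2 :=
    (summable_geometric_two.sum_le_tsum _ fun _ _ => by positivity).trans_eq
      tsum_geometric_two
  calc varSum (fun B t => if t ∈ ⋃ n, W n then h B t else 0) D
      = ∑ n ∈ T.image (fun p => idx p.2), ∑ p ∈ T.filter (fun p => idx p.2 = n), |h p.1 p.2| := by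
        rw [hvar, Finset.sum_image']
        exact fun p _ => rfl
    _ ≤ ∑ n ∈ T.image (fun p => idx p.2), ε / 4 * (1 / 2) ^ n :=
        Finset.sum_le_sum fun n _ => (hfiber n).le
    _ ≤ ε / 4 * 2 := by rw [← Finset.mul_sum]; gcongr
    _ < ε := by linarith

theorem variationOn_mul_vol_eq_zero {X : Set (ι → ℝ)} (hX : mustar I X = 0)
    (φ : (ι → ℝ) → ℝ) : variationOn I (fun B t => φ t * B.vol) X = 0 := by
  have hX' : X = ⋃ k : ℕ, {t | t ∈ X ∧ ⌊|φ t|⌋₊ = k} := by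
    ext t
    simp
  rw [hX']
  refine variationOn_iUnion_eq_zero fun k => variation_eq_zero_of_abs_le (c := k + 1) ?_ hX
  intro B t
  by_cases ht : t ∈ {t | t ∈ X ∧ ⌊|φ t|⌋₊ = k}
  · rw [if_pos ht]
    obtain ⟨htX, hk⟩ : t ∈ X ∧ ⌊|φ t|⌋₊ = k := ht
    have hφ : |φ t| ≤ k + 1 := (hk ▸ Nat.lt_floor_add_one |φ t|).le
    rw [if_pos htX, abs_mul, abs_of_nonneg B.vol_nonneg]
    exact mul_le_mul_of_nonneg_right hφ B.vol_nonneg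
  · rw [if_neg ht, abs_zero]
    positivity

end Variation

section Product

variable {κ : Type*} [Fintype κ]

namespace Brick

theorem mem_prod_toSet {I : Brick ι} {J : Brick κ} {z : ι ⊕ κ → ℝ} :
    z ∈ (I.prod J).toSet ↔ z ∘ Sum.inl ∈ I.toSet ∧ z ∘ Sum.inr ∈ J.toSet :=
  Sum.forall

theorem mem_prod_inter {I : Brick ι} {J : Brick κ} {z : ι ⊕ κ → ℝ} :
    z ∈ (I.prod J).inter ↔ z ∘ Sum.inl ∈ I.inter ∧ z ∘ Sum.inr ∈ J.inter :=
  Sum.forall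

theorem elim_mem_prod_toSet {I : Brick ι} {J : Brick κ} {x : ι → ℝ} {y : κ → ℝ} :
    Sum.elim x y ∈ (I.prod J).toSet ↔ x ∈ I.toSet ∧ y ∈ J.toSet :=
  mem_prod_toSet

theorem vol_prod (I : Brick ι) (J : Brick κ) : (I.prod J).vol = I.vol * J.vol := by
  simp [vol, prod, Fintype.prod_sum_type]

theorem prod_subset_prod {I L : Brick ι} {J M : Brick κ} (hI : L.toSet ⊆ I.toSet)
    (hJ : M.toSet ⊆ J.toSet) : (L.prod M).toSet ⊆ (I.prod J).toSet := fun _ hz =>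
  mem_prod_toSet.2 ⟨hI (mem_prod_toSet.1 hz).1, hJ (mem_prod_toSet.1 hz).2⟩

theorem prod_subset_ball {L : Brick ι} {M : Brick κ} {x : ι → ℝ} {y : κ → ℝ} {r : ℝ}
    (hL : L.toSet ⊆ Metric.ball x r) (hM : M.toSet ⊆ Metric.ball y r) :
    (L.prod M).toSet ⊆ Metric.ball (Sum.elim x y) r := by
  intro z hz
  have h₁ := Metric.mem_ball.1 (hL (mem_prod_toSet.1 hz).1)
  have h₂ := Metric.mem_ball.1 (hM (mem_prod_toSet.1 hz).2)
  rw [Metric.mem_ball, dist_pi_lt_iff (dist_nonneg.trans_lt h₁)]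
  rintro (j | j)
  exacts [(dist_le_pi_dist (z ∘ Sum.inl) x j).trans_lt h₁,
    (dist_le_pi_dist (z ∘ Sum.inr) y j).trans_lt h₂]

end Brick

theorem IsGauge.slice {I : Brick ι} {J : Brick κ} {Δ : (ι ⊕ κ → ℝ) → ℝ}
    (hΔ : IsGauge (I.prod J) Δ) {x : ι → ℝ} (hx : x ∈ I.toSet) :
    IsGauge J fun y => Δ (Sum.elim x y) :=
  fun _ hy => hΔ _ (Brick.elim_mem_prod_toSet.2 ⟨hx, hy⟩)

def prodTagged (p : Brick ι × (ι → ℝ)) (q : Brick κ × (κ → ℝ)) :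
    Brick (ι ⊕ κ) × (ι ⊕ κ → ℝ) :=
  (p.1.prod q.1, Sum.elim p.2 q.2)

theorem prodTagged_injective : Function.Injective2 (prodTagged (ι := ι) (κ := κ)) := by
  rintro ⟨L, x⟩ ⟨L', x'⟩ ⟨M, y⟩ ⟨M', y'⟩ h
  simp only [prodTagged, Prod.mk.injEq, Sum.elim_eq_iff] at h
  obtain ⟨hB, rfl, rfl⟩ := h
  have hl := congrArg Brick.lower hB
  have hu := congrArg Brick.upper hB
  simp only [Brick.prod, Sum.elim_eq_iff] at hl hu
  exact ⟨Prod.ext (Brick.ext hl.1 hu.1) rfl, Prod.ext (Brick.ext hl.2 hu.2) rfl⟩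

namespace TaggedDiv

variable {I : Brick ι} {J : Brick κ}

noncomputable def prodDiv (D : TaggedDiv I) (E : (ι → ℝ) → TaggedDiv J) :
    TaggedDiv (I.prod J) where
  pieces := (D.pieces.sigma fun p => (E p.2).pieces).image fun s => prodTagged s.1 s.2
  subset_of_mem := by
    simp only [Finset.mem_image, Finset.mem_sigma, forall_exists_index, and_imp]
    rintro _ ⟨p, q⟩ hp hq rfl
    exact Brick.prod_subset_prod (D.subset_of_mem p hp) ((E p.2).subset_of_mem q hq)
  tag_mem := by
    simp only [Finset.mem_image, Finset.mem_sigma, forall_exists_index, and_imp]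
    rintro _ ⟨p, q⟩ hp hq rfl
    exact Brick.elim_mem_prod_toSet.2 ⟨D.tag_mem p hp, (E p.2).tag_mem q hq⟩
  nonoverlap := by
    simp only [Finset.mem_image, Finset.mem_sigma, forall_exists_index, and_imp]
    rintro _ ⟨p, q⟩ hp hq rfl _ ⟨p', q'⟩ hp' hq' rfl hne
    refine eq_empty_iff_forall_notMem.2 fun z ⟨hz, hz'⟩ => ?_
    rw [prodTagged, Brick.mem_prod_inter] at hz hz'
    by_cases hpp : p = p'
    · subst hpp
      have hqq : q ≠ q' := by rintro rfl; exact hne rfl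
      exact ((E p.2).nonoverlap q hq q' hq' hqq).subset ⟨hz.2, hz'.2⟩
    · exact (D.nonoverlap p hp p' hp' hpp).subset ⟨hz.1, hz'.1⟩
  cover := by
    refine Subset.antisymm (fun z hz => ?_) (iUnion₂_subset fun r hr => ?_)
    · obtain ⟨hzI, hzJ⟩ := Brick.mem_prod_toSet.1 hz
      rw [D.cover, mem_iUnion₂] at hzI
      obtain ⟨p, hp, hzp⟩ := hzI
      rw [(E p.2).cover, mem_iUnion₂] at hzJ
      obtain ⟨q, hq, hzq⟩ := hzJ
      exact mem_iUnion₂.2 ⟨prodTagged p q, Finset.mem_image.2 ⟨⟨p, q⟩, Finset.mem_sigma.2 ⟨hp, hq⟩,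
        rfl⟩, Brick.mem_prod_toSet.2 ⟨hzp, hzq⟩⟩
    · obtain ⟨⟨p, q⟩, hpq, rfl⟩ := Finset.mem_image.1 hr
      obtain ⟨hp, hq⟩ := Finset.mem_sigma.1 hpq
      exact Brick.prod_subset_prod (D.subset_of_mem p hp) ((E p.2).subset_of_mem q hq)

theorem riemannSum_prodDiv (D : TaggedDiv I) (E : (ι → ℝ) → TaggedDiv J)
    (f : (ι ⊕ κ → ℝ) → ℝ) :
    riemannSum f (D.prodDiv E) =
      ∑ p ∈ D.pieces, riemannSum (fun y => f (Sum.elim p.2 y)) (E p.2) * p.1.vol := by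
  rw [riemannSum, prodDiv, Finset.sum_image, Finset.sum_sigma]
  · refine Finset.sum_congr rfl fun p _ => ?_
    rw [riemannSum, Finset.sum_mul]
    refine Finset.sum_congr rfl fun q _ => ?_
    rw [prodTagged, Brick.vol_prod]
    ring
  · rintro ⟨p, q⟩ - ⟨p', q'⟩ - h
    obtain ⟨rfl, rfl⟩ := prodTagged_injective h
    rfl

theorem exists_gauge_compat_prodDiv {Δ : (ι ⊕ κ → ℝ) → ℝ} (hΔ : IsGauge (I.prod J) Δ)
    (E : (ι → ℝ) → TaggedDiv J) (hE : ∀ x ∈ I.toSet, Compat (E x) fun y => Δ (Sum.elim x y)) :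
    ∃ δ, IsGauge I δ ∧ ∀ D : TaggedDiv I, Compat D δ → Compat (D.prodDiv E) Δ := by
  refine ⟨fun x => (E x).pieces.inf' (E x).pieces_nonempty fun q => Δ (Sum.elim x q.2),
    fun x hx => (Finset.lt_inf'_iff _).2 fun q hq => hΔ.slice hx _ ((E x).tag_mem_base hq),
    fun D hD => ?_⟩
  simp only [Compat, prodDiv, Finset.mem_image, Finset.mem_sigma, forall_exists_index, and_imp]
  rintro _ ⟨p, q⟩ hp hq rfl
  exact Brick.prod_subset_ball ((hD p hp).trans (Metric.ball_subset_ball (Finset.inf'_le _ hq)))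
    (hE p.2 (D.tag_mem_base hp) q hq)

end TaggedDiv

end Product

section Reindex

variable {ι' : Type*} [Fintype ι']

theorem dist_comp_equiv (e : ι ≃ ι') (w w' : ι' → ℝ) : dist (w ∘ e) (w' ∘ e) = dist w w' := by
  refine le_antisymm ((dist_pi_le_iff dist_nonneg).2 fun j => dist_le_pi_dist w w' (e j))
    ((dist_pi_le_iff dist_nonneg).2 fun j => ?_)
  simpa using dist_le_pi_dist (w ∘ e) (w' ∘ e) (e.symm j)

namespace Brick

def reindex (B : Brick ι) (e : ι ≃ ι') : Brick ι' where
  lower := B.lower ∘ e.symm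
  upper := B.upper ∘ e.symm
  lt _ := B.lt _

theorem mem_reindex_toSet {B : Brick ι} {e : ι ≃ ι'} {w : ι' → ℝ} :
    w ∈ (B.reindex e).toSet ↔ w ∘ e ∈ B.toSet := by
  simp [toSet, reindex, e.forall_congr_left]

theorem mem_reindex_inter {B : Brick ι} {e : ι ≃ ι'} {w : ι' → ℝ} :
    w ∈ (B.reindex e).inter ↔ w ∘ e ∈ B.inter := by
  simp [inter, reindex, e.forall_congr_left]

theorem vol_reindex (B : Brick ι) (e : ι ≃ ι') : (B.reindex e).vol = B.vol :=
  e.symm.prod_comp fun j => B.upper j - B.lower j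

theorem reindex_reindex_symm (B : Brick ι) (e : ι ≃ ι') : (B.reindex e).reindex e.symm = B :=
  ext (by ext; simp [reindex]) (by ext; simp [reindex])

theorem reindex_subset_ball {B : Brick ι} {x : ι → ℝ} {r : ℝ} (h : B.toSet ⊆ Metric.ball x r)
    (e : ι ≃ ι') : (B.reindex e).toSet ⊆ Metric.ball (x ∘ e.symm) r := by
  intro w hw
  have := h (mem_reindex_toSet.1 hw)
  rwa [Metric.mem_ball, ← dist_comp_equiv e, Function.comp_assoc, e.symm_comp_self,
    Function.comp_id] at *

theorem prod_reindex_sumComm {κ : Type*} [Fintype κ] (I : Brick ι) (J : Brick κ) :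
    (I.prod J).reindex (Equiv.sumComm ι κ) = J.prod I :=
  ext (by ext (j | j) <;> rfl) (by ext (j | j) <;> rfl)

end Brick

namespace TaggedDiv

variable {B : Brick ι}

def copy (D : TaggedDiv B) {C : Brick ι} (h : B = C) : TaggedDiv C where
  pieces := D.pieces
  subset_of_mem := h ▸ D.subset_of_mem
  tag_mem := D.tag_mem
  nonoverlap := D.nonoverlap
  cover := h ▸ D.cover

noncomputable def reindex (D : TaggedDiv B) (e : ι ≃ ι') : TaggedDiv (B.reindex e) where
  pieces := D.pieces.image fun p => (p.1.reindex e, p.2 ∘ e.symm)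
  subset_of_mem := by
    simp only [Finset.mem_image, forall_exists_index, and_imp]
    rintro _ p hp rfl w hw
    exact Brick.mem_reindex_toSet.2 (D.subset_of_mem p hp (Brick.mem_reindex_toSet.1 hw))
  tag_mem := by
    simp only [Finset.mem_image, forall_exists_index, and_imp]
    rintro _ p hp rfl
    simpa [Brick.mem_reindex_toSet, Function.comp_assoc] using D.tag_mem p hp
  nonoverlap := by
    simp only [Finset.mem_image, forall_exists_index, and_imp]
    rintro _ p hp rfl _ q hq rfl hne
    have hpq : p ≠ q := by rintro rfl; exact hne rfl
    refine eq_empty_iff_forall_notMem.2 fun w ⟨hw, hw'⟩ => ?_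
    exact (D.nonoverlap p hp q hq hpq).subset
      ⟨Brick.mem_reindex_inter.1 hw, Brick.mem_reindex_inter.1 hw'⟩
  cover := by
    ext w
    simp only [Brick.mem_reindex_toSet, Finset.set_biUnion_finset_image]
    rw [D.cover]
    simp only [mem_iUnion₂, Brick.mem_reindex_toSet, exists_prop]

theorem riemannSum_reindex (D : TaggedDiv B) (e : ι ≃ ι') (f : (ι' → ℝ) → ℝ) :
    riemannSum f (D.reindex e) = riemannSum (fun x => f (x ∘ e.symm)) D := by
  rw [riemannSum, reindex, Finset.sum_image]
  · simp only [Brick.vol_reindex]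
    rfl
  · intro p _ q _ h
    simp only [Prod.mk.injEq] at h
    refine Prod.ext ?_ ?_
    · simpa only [Brick.reindex_reindex_symm] using congrArg (Brick.reindex · e.symm) h.1
    · simpa [Function.comp_assoc] using congrArg (· ∘ e) h.2

end TaggedDiv

theorem HasHK.reindex {B : Brick ι} {f : (ι → ℝ) → ℝ} {F : ℝ} (hf : HasHK B f F)
    (e : ι ≃ ι') : HasHK (B.reindex e) (fun w => f (w ∘ e)) F := by
  intro ε hε
  obtain ⟨Δ, hΔ, hfΔ⟩ := hf ε hε
  refine ⟨fun w => Δ (w ∘ e), fun w hw => hΔ _ (Brick.mem_reindex_toSet.1 hw), fun D' hD' => ?_⟩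
  let D : TaggedDiv B := (D'.reindex e.symm).copy (B.reindex_reindex_symm e)
  have hD : Compat D Δ := by
    simp only [Compat, D, TaggedDiv.copy, TaggedDiv.reindex, Finset.mem_image,
      forall_exists_index, and_imp]
    rintro _ p hp rfl
    exact Brick.reindex_subset_ball (hD' p hp) e.symm
  have := hfΔ D hD
  rwa [show riemannSum f D = riemannSum f (D'.reindex e.symm) from rfl,
    TaggedDiv.riemannSum_reindex] at this

end Reindex

def HKCauchy (J : Brick ι) (u : (ι → ℝ) → ℝ) (η : ℝ) : Prop :=
  ∃ δ, IsGauge J δ ∧ ∀ D₁ D₂ : TaggedDiv J, Compat D₁ δ → Compat D₂ δ →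
    riemannSum u D₁ - riemannSum u D₂ ≤ η

theorem HKCauchy.mono {J : Brick ι} {u : (ι → ℝ) → ℝ} {η η' : ℝ} (h : HKCauchy J u η)
    (hη : η ≤ η') : HKCauchy J u η' :=
  let ⟨δ, hδ, hu⟩ := h
  ⟨δ, hδ, fun D₁ D₂ h₁ h₂ => (hu D₁ D₂ h₁ h₂).trans hη⟩

theorem exists_hasHK_of_hkCauchy {J : Brick ι} {u : (ι → ℝ) → ℝ}
    (h : ∀ η > 0, HKCauchy J u η) : ∃ A, HasHK J u A := by
  choose δ hδ hu using fun n : ℕ => h (1 / (n + 1)) Nat.one_div_pos_of_nat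
  have hu' : ∀ n D₁ D₂, Compat D₁ (δ n) → Compat D₂ (δ n) →
      |riemannSum u D₁ - riemannSum u D₂| ≤ 1 / (n + 1) := fun n D₁ D₂ h₁ h₂ =>
    abs_sub_le_iff.2 ⟨hu n D₁ D₂ h₁ h₂, hu n D₂ D₁ h₂ h₁⟩
  -- `γ n` is finer than each of `δ 0, …, δ n`
  let γ : ℕ → (ι → ℝ) → ℝ := fun n x => (Finset.range (n + 1)).inf' (by simp) fun k => δ k x
  have hγ : ∀ n, IsGauge J (γ n) := fun n x hx =>
    (Finset.lt_inf'_iff _).2 fun k _ => hδ k x hx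
  choose D hD using fun n => TaggedDiv.exists_compat J (hγ n)
  have hDδ : ∀ n k, k ≤ n → Compat (D n) (δ k) := fun n k hk =>
    (hD n).mono fun x => Finset.inf'_le _ (Finset.mem_range.2 (Nat.lt_succ_of_le hk))
  have hcauchy : CauchySeq fun n => riemannSum u (D n) := by
    refine Metric.cauchySeq_iff.2 fun ε hε => ?_
    obtain ⟨N, hN⟩ := exists_nat_one_div_lt hε
    exact ⟨N, fun m hm n hn => (hu' N _ _ (hDδ m N hm) (hDδ n N hn)).trans_lt hN⟩
  obtain ⟨A, hA⟩ := cauchySeq_tendsto_of_complete hcauchy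
  refine ⟨A, fun ε hε => ?_⟩
  obtain ⟨N, hN⟩ := exists_nat_one_div_lt hε
  refine ⟨δ N, hδ N, fun D' hD' => ?_⟩
  have hle : |riemannSum u D' - A| ≤ 1 / (N + 1) :=
    le_of_tendsto ((hA.const_sub _).abs) <| eventually_atTop.2
      ⟨N, fun m hm => hu' N D' (D m) hD' (hDδ m N hm)⟩
  exact hle.trans_lt hN

section Fubini

variable {κ : Type*} [Fintype κ] {I : Brick ι} {J : Brick κ} {f : (ι ⊕ κ → ℝ) → ℝ} {F : ℝ}

theorem mustar_setOf_not_hkCauchy (hf : HasHK (I.prod J) f F) {η : ℝ} (hη : 0 < η) :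
    mustar I {x | ¬HKCauchy J (fun y => f (Sum.elim x y)) η} = 0 := by
  generalize hX : {x | ¬HKCauchy J (fun y => f (Sum.elim x y)) η} = X
  refine variation_eq_zero_iff.2 fun ε hε => ?_
  obtain ⟨Δ, hΔ, hfΔ⟩ := hf (ε * η / 2) (by positivity)
  have hE : ∀ x, ∃ E₁ E₂ : TaggedDiv J, (x ∈ I.toSet →
      (Compat E₁ fun y => Δ (Sum.elim x y)) ∧ (Compat E₂ fun y => Δ (Sum.elim x y)) ∧
      (x ∈ X → η < riemannSum (fun y => f (Sum.elim x y)) E₁ -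
        riemannSum (fun y => f (Sum.elim x y)) E₂)) ∧ (x ∉ X → E₁ = E₂) := by
    intro x
    by_cases hxI : x ∈ I.toSet
    · have hΔx := hΔ.slice hxI
      by_cases hxX : x ∈ X
      · have hosc : ¬HKCauchy J (fun y => f (Sum.elim x y)) η := by rwa [← hX] at hxX
        simp only [HKCauchy] at hosc
        push Not at hosc
        obtain ⟨E₁, E₂, h₁, h₂, hgap⟩ := hosc _ hΔx
        exact ⟨E₁, E₂, fun _ => ⟨h₁, h₂, fun _ => hgap⟩, fun h => absurd hxX h⟩
      · obtain ⟨E, hE⟩ := TaggedDiv.exists_compat J hΔx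
        exact ⟨E, E, fun _ => ⟨hE, hE, fun h => absurd h hxX⟩, fun _ => rfl⟩
    · exact ⟨.single J _ J.lower_mem_toSet, .single J _ J.lower_mem_toSet,
        fun h => absurd h hxI, fun _ => rfl⟩
  choose E₁ E₂ hE hEq using hE
  obtain ⟨δ₁, hδ₁, hP₁⟩ := TaggedDiv.exists_gauge_compat_prodDiv hΔ E₁ fun x hx => (hE x hx).1
  obtain ⟨δ₂, hδ₂, hP₂⟩ := TaggedDiv.exists_gauge_compat_prodDiv hΔ E₂ fun x hx => (hE x hx).2.1
  refine ⟨fun x => min (δ₁ x) (δ₂ x), hδ₁.min hδ₂, fun D hD => ?_⟩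
  have hgap : η * varSum (fun B t => if t ∈ X then B.vol else 0) D ≤
      riemannSum f (D.prodDiv E₁) - riemannSum f (D.prodDiv E₂) := by
    rw [varSum_ite_vol, Finset.mul_sum, TaggedDiv.riemannSum_prodDiv,
      TaggedDiv.riemannSum_prodDiv, ← Finset.sum_sub_distrib]
    refine Finset.sum_le_sum fun p hp => ?_
    by_cases hpX : p.2 ∈ X
    · rw [if_pos hpX, ← sub_mul]
      exact mul_le_mul_of_nonneg_right ((hE _ (D.tag_mem_base hp)).2.2 hpX).le p.1.vol_nonneg
    · rw [if_neg hpX, hEq _ hpX, sub_self, mul_zero]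
  have h₁ := abs_lt.1 (hfΔ _ (hP₁ D (hD.mono fun _ => min_le_left _ _)))
  have h₂ := abs_lt.1 (hfΔ _ (hP₂ D (hD.mono fun _ => min_le_right _ _)))
  have hlt : η * varSum (fun B t => if t ∈ X then B.vol else 0) D < η * ε := by linarith
  exact lt_of_mul_lt_mul_left hlt hη.le

theorem abs_riemannSum_sub_riemannSum_prodDiv_le (D : TaggedDiv I) (E : (ι → ℝ) → TaggedDiv J)
    {g : (ι → ℝ) → ℝ} {X : Set (ι → ℝ)} (hg0 : ∀ x ∈ X, g x = 0) {c : ℝ} (hc : 0 ≤ c)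
    (hE : ∀ p ∈ D.pieces, p.2 ∉ X →
      |riemannSum (fun y => f (Sum.elim p.2 y)) (E p.2) - g p.2| ≤ c) :
    |riemannSum g D - riemannSum f (D.prodDiv E)| ≤
      varSum (fun B t => if t ∈ X then riemannSum (fun y => f (Sum.elim t y)) (E t) * B.vol
        else 0) D + c * I.vol := by
  rw [TaggedDiv.riemannSum_prodDiv, riemannSum, ← Finset.sum_sub_distrib, ← D.sum_vol,
    Finset.mul_sum, varSum, ← Finset.sum_add_distrib]
  refine (Finset.abs_sum_le_sum_abs _ _).trans (Finset.sum_le_sum fun p hp => ?_)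
  rw [← sub_mul, abs_mul, abs_of_nonneg p.1.vol_nonneg]
  by_cases hpX : p.2 ∈ X
  · rw [if_pos hpX, hg0 _ hpX, zero_sub, abs_neg, abs_mul, abs_of_nonneg p.1.vol_nonneg]
    linarith [mul_nonneg hc p.1.vol_nonneg]
  · rw [if_neg hpX, abs_zero, zero_add, abs_sub_comm]
    exact mul_le_mul_of_nonneg_right (hE p hp hpX) p.1.vol_nonneg

theorem hasHK_of_hasHK_sections (hf : HasHK (I.prod J) f F) {X : Set (ι → ℝ)}
    (hX : mustar I X = 0) {g : (ι → ℝ) → ℝ}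
    (hg : ∀ x ∈ I.toSet, x ∉ X → HasHK J (fun y => f (Sum.elim x y)) (g x))
    (hg0 : ∀ x ∈ X, g x = 0) : HasHK I g F := by
  intro ε hε
  set ε' := ε / (I.vol + 3)
  have hε' : 0 < ε' := div_pos hε (by linarith [I.vol_nonneg])
  obtain ⟨Δ, hΔ, hfΔ⟩ := hf ε' hε'
  have hE : ∀ x, ∃ E : TaggedDiv J, x ∈ I.toSet → (Compat E fun y => Δ (Sum.elim x y)) ∧
      (x ∉ X → |riemannSum (fun y => f (Sum.elim x y)) E - g x| < ε') := by
    intro x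
    by_cases hxI : x ∈ I.toSet
    · by_cases hxX : x ∈ X
      · obtain ⟨E, hE⟩ := TaggedDiv.exists_compat J (hΔ.slice hxI)
        exact ⟨E, fun _ => ⟨hE, fun h => absurd hxX h⟩⟩
      · obtain ⟨δ, hδ, hgδ⟩ := hg x hxI hxX ε' hε'
        obtain ⟨E, hE⟩ := TaggedDiv.exists_compat J (hδ.min (hΔ.slice hxI))
        exact ⟨E, fun _ => ⟨hE.mono fun _ => min_le_right _ _,
          fun _ => hgδ E (hE.mono fun _ => min_le_left _ _)⟩⟩
    · exact ⟨.single J _ J.lower_mem_toSet, fun h => absurd h hxI⟩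
  choose E hE using hE
  obtain ⟨δ₁, hδ₁, hP⟩ := TaggedDiv.exists_gauge_compat_prodDiv hΔ E fun x hx => (hE x hx).1
  obtain ⟨δ₂, hδ₂, hvar⟩ := variation_eq_zero_iff.1
    (variationOn_mul_vol_eq_zero hX fun x => riemannSum (fun y => f (Sum.elim x y)) (E x)) ε' hε'
  refine ⟨fun x => min (δ₁ x) (δ₂ x), hδ₁.min hδ₂, fun D hD => ?_⟩
  have hsec := abs_riemannSum_sub_riemannSum_prodDiv_le D E hg0 hε'.le fun p hp hpX =>
    ((hE p.2 (D.tag_mem_base hp)).2 hpX).le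
  have hvarD := hvar D (hD.mono fun _ => min_le_right _ _)
  have hF := hfΔ _ (hP D (hD.mono fun _ => min_le_left _ _))
  have hε'ε : ε' * (I.vol + 3) = ε := div_mul_cancel₀ ε (by linarith [I.vol_nonneg])
  calc |riemannSum g D - F|
      ≤ |riemannSum g D - riemannSum f (D.prodDiv E)| + |riemannSum f (D.prodDiv E) - F| :=
        abs_sub_le _ _ _
    _ < ε' + ε' * I.vol + ε' := by linarith
    _ < ε := by linarith

theorem HasHK.exists_sections (hf : HasHK (I.prod J) f F) :
    ∃ (X : Set (ι → ℝ)) (g : (ι → ℝ) → ℝ), mustar I X = 0 ∧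
      (∀ x ∈ I.toSet, x ∉ X → HasHK J (fun y => f (Sum.elim x y)) (g x)) ∧
      (∀ x ∈ X, g x = 0) ∧ HasHK I g F := by
  set X := ⋃ n : ℕ, {x | ¬HKCauchy J (fun y => f (Sum.elim x y)) (1 / (n + 1))}
  have hX : mustar I X = 0 :=
    variationOn_iUnion_eq_zero fun n => mustar_setOf_not_hkCauchy hf Nat.one_div_pos_of_nat
  have hsec : ∀ x ∉ X, ∃ A, HasHK J (fun y => f (Sum.elim x y)) A := by
    refine fun x hx => exists_hasHK_of_hkCauchy fun η hη => ?_
    obtain ⟨n, hn⟩ := exists_nat_one_div_lt hη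
    exact (not_not.1 fun h => hx (mem_iUnion.2 ⟨n, h⟩)).mono hn.le
  choose! g₀ hg₀ using hsec
  let g := fun x => if x ∈ X then 0 else g₀ x
  have hg : ∀ x ∈ I.toSet, x ∉ X → HasHK J (fun y => f (Sum.elim x y)) (g x) :=
    fun x _ hx => by simpa only [g, if_neg hx] using hg₀ x hx
  have hg0 : ∀ x ∈ X, g x = 0 := fun x hx => if_pos hx
  exact ⟨X, g, hX, hg, hg0, hasHK_of_hasHK_sections hf hX hg hg0⟩

end Fubini

/-- **Fubini's theorem for gauge integrals.** If `f` is HK-integrable on `I × J` with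
integral `F`, then the partial integral `g x = ∫_J f(x,·)` exists for all `x` outside a set
of outer measure zero in `I`, and (set to `0` on the exceptional set) `g` is HK-integrable
on `I` with `∫_I g = F`; symmetrically in the other variable. -/
theorem fubini_hk {κ : Type*} [Fintype κ] (I : Brick ι) (J : Brick κ)
    (f : (ι ⊕ κ → ℝ) → ℝ) (F : ℝ) (hf : HasHK (I.prod J) f F) :
    (∃ (X : Set (ι → ℝ)) (g : (ι → ℝ) → ℝ),
      mustar I X = 0 ∧
      (∀ x ∈ I.toSet, x ∉ X → HasHK J (fun y => f (Sum.elim x y)) (g x)) ∧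
      (∀ x ∈ X, g x = 0) ∧ HasHK I g F) ∧
    (∃ (Y : Set (κ → ℝ)) (h : (κ → ℝ) → ℝ),
      mustar J Y = 0 ∧
      (∀ y ∈ J.toSet, y ∉ Y → HasHK I (fun x => f (Sum.elim x y)) (h y)) ∧
      (∀ y ∈ Y, h y = 0) ∧ HasHK J h F) := by
  have hswap : HasHK (J.prod I) (fun w => f (w ∘ Equiv.sumComm ι κ)) F :=
    I.prod_reindex_sumComm J ▸ hf.reindex (Equiv.sumComm ι κ)
  obtain ⟨Y, h, hY, hsec, hzero, hint⟩ := hswap.exists_sections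
  refine ⟨hf.exists_sections, Y, h, hY, fun y hy hyY => ?_, hzero, hint⟩
  simpa using hsec y hy hyY
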